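/- arXiv:2006.02829 — 6 statements merged into one kernel-verified Lean document; each statement's English description precedes it below -/
import Mathlib

section
/- If G is a well-dominated finite simple graph of order n (i.e., all minimal dominating sets of G have the same cardinality), then Ψ⁻_g(G) = Ψ⁺_g(G) = n − γ(G). -/
/-!
A position of the game is always an enclaveless set, and the game stops exactly when the
position is a maximal enclaveless set. Since `S` is enclaveless iff `V \ S` is dominating,
maximal enclaveless sets are the complements of minimal dominating sets. In a well-dominated
graph every such complement has `n - γ(G)` vertices, so every play ends with that score,
whatever either player does.
-/

namespace EnclavelessGame

variable {V : Type*} [Fintype V] [DecidableEq V]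

/-- `v` is an enclave of `S` if `v ∈ S` and its closed neighborhood `N[v]` is contained in `S`. -/
def IsEnclave (G : SimpleGraph V) (S : Finset V) (v : V) : Prop :=
  v ∈ S ∧ ∀ u, G.Adj v u → u ∈ S

/-- `S` is enclaveless if it contains no enclave. -/
def IsEnclaveless (G : SimpleGraph V) (S : Finset V) : Prop :=
  ∀ v, ¬ IsEnclave G S v

instance (G : SimpleGraph V) [DecidableRel G.Adj] (S : Finset V) :
    Decidable (IsEnclaveless G S) := by
  unfold IsEnclaveless IsEnclave
  infer_instance

/-- `D` is a dominating set: every vertex lies in the closed neighborhood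
of some vertex of `D`. -/
def IsDominating (G : SimpleGraph V) (D : Finset V) : Prop :=
  ∀ v, ∃ u ∈ D, u = v ∨ G.Adj u v

/-- `D` is a minimal dominating set (minimal with respect to set inclusion). -/
def IsMinimalDominating (G : SimpleGraph V) (D : Finset V) : Prop :=
  IsDominating G D ∧ ∀ D' ⊆ D, IsDominating G D' → D' = D

/-- `S` is a maximal enclaveless set (maximal with respect to set inclusion). -/
def IsMaximalEnclaveless (G : SimpleGraph V) (S : Finset V) : Prop :=
  IsEnclaveless G S ∧ ∀ T, S ⊆ T → IsEnclaveless G T → T = S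

/-- The domination number `γ(G)`: minimum cardinality of a dominating set. -/
noncomputable def domNum (G : SimpleGraph V) : ℕ :=
  sInf {k | ∃ D : Finset V, IsDominating G D ∧ D.card = k}

/-- The upper domination number `Γ(G)`: maximum cardinality of a minimal dominating set. -/
noncomputable def upperDomNum (G : SimpleGraph V) : ℕ :=
  sSup {k | ∃ D : Finset V, IsMinimalDominating G D ∧ D.card = k}

/-- The enclaveless number `Ψ(G)`: maximum cardinality of an enclaveless set. -/
noncomputable def enclavelessNum (G : SimpleGraph V) : ℕ :=
  sSup {k | ∃ S : Finset V, IsEnclaveless G S ∧ S.card = k}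

/-- The lower enclaveless number `ψ(G)`: minimum cardinality of a maximal enclaveless set. -/
noncomputable def lowerEnclavelessNum (G : SimpleGraph V) : ℕ :=
  sInf {k | ∃ S : Finset V, IsMaximalEnclaveless G S ∧ S.card = k}

/-- The set of playable vertices given the set `S` of already chosen vertices:
vertices `v ∉ S` such that `S ∪ {v}` is enclaveless. -/
def playableSet (G : SimpleGraph V) [DecidableRel G.Adj] (S : Finset V) : Finset V :=
  Finset.univ.filter (fun v => v ∉ S ∧ IsEnclaveless G (insert v S))

/-- The value of the competition-enclaveless game from position `S`: `maxTurn = true`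
means it is Maximizer's turn (this computes `MaxVal S`), and `maxTurn = false` means it
is Minimizer's turn (this computes `MinVal S`). If no vertex is playable the value is
`|S|`; otherwise it is the max (resp. min) over playable `v` of the value of
`S ∪ {v}` with the turn switched. -/
def gameVal (G : SimpleGraph V) [DecidableRel G.Adj] (maxTurn : Bool) (S : Finset V) : ℕ :=
  if h : (playableSet G S).Nonempty then
    if maxTurn then
      (playableSet G S).attach.sup' (by simpa using h)
        (fun v => gameVal G false (insert v.1 S))
    else
      (playableSet G S).attach.inf' (by simpa using h)
        (fun v => gameVal G true (insert v.1 S))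
  else S.card
termination_by Sᶜ.card
decreasing_by
  all_goals
    have hv := v.2
    simp only [playableSet, Finset.mem_filter] at hv
    rw [Finset.compl_insert]
    exact Finset.card_erase_lt_of_mem (Finset.mem_compl.mpr hv.2.1)

/-- The Maximizer-start enclaveless game number `Ψ⁺_g(G) = MaxVal ∅`. -/
def maxStartGameNum (G : SimpleGraph V) [DecidableRel G.Adj] : ℕ := gameVal G true ∅

/-- The Minimizer-start enclaveless game number `Ψ⁻_g(G) = MinVal ∅`. -/
def minStartGameNum (G : SimpleGraph V) [DecidableRel G.Adj] : ℕ := gameVal G false ∅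

variable {G : SimpleGraph V}

theorem isEnclaveless_iff_isDominating_compl {S : Finset V} :
    IsEnclaveless G S ↔ IsDominating G Sᶜ := by
  constructor
  · intro h v
    by_cases hv : v ∈ S
    · obtain ⟨u, hadj, hu⟩ : ∃ u, G.Adj v u ∧ u ∉ S := by
        simpa [IsEnclave, hv] using h v
      exact ⟨u, Finset.mem_compl.mpr hu, Or.inr hadj.symm⟩
    · exact ⟨v, Finset.mem_compl.mpr hv, Or.inl rfl⟩
  · rintro h v ⟨hvS, hnbhd⟩
    obtain ⟨u, hu, rfl | hadj⟩ := h v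
    · exact Finset.mem_compl.mp hu hvS
    · exact Finset.mem_compl.mp hu (hnbhd u hadj.symm)

omit [Fintype V] [DecidableEq V] in
theorem isEnclaveless_empty : IsEnclaveless G ∅ := fun v hv =>
  Finset.notMem_empty v hv.1

omit [Fintype V] [DecidableEq V] in
theorem IsEnclaveless.anti {S T : Finset V} (hT : IsEnclaveless G T) (hST : S ⊆ T) :
    IsEnclaveless G S := fun v hv =>
  hT v ⟨hST hv.1, fun u hu => hST (hv.2 u hu)⟩

theorem mem_playableSet [DecidableRel G.Adj] {S : Finset V} {v : V} :
    v ∈ playableSet G S ↔ v ∉ S ∧ IsEnclaveless G (insert v S) := by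
  simp [playableSet]

theorem isMaximalEnclaveless_of_not_nonempty_playableSet [DecidableRel G.Adj] {S : Finset V}
    (hS : IsEnclaveless G S) (hstop : ¬ (playableSet G S).Nonempty) :
    IsMaximalEnclaveless G S := by
  refine ⟨hS, fun T hST hT => ?_⟩
  by_contra hne
  obtain ⟨v, hvT, hvS⟩ := Finset.exists_of_ssubset (hST.ssubset_of_ne (Ne.symm hne))
  exact hstop ⟨v, mem_playableSet.mpr ⟨hvS, hT.anti (Finset.insert_subset hvT hST)⟩⟩

theorem IsMaximalEnclaveless.isMinimalDominating_compl {S : Finset V}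
    (hS : IsMaximalEnclaveless G S) : IsMinimalDominating G Sᶜ := by
  refine ⟨isEnclaveless_iff_isDominating_compl.mp hS.1, fun D hD hdom => ?_⟩
  have hDc : IsEnclaveless G Dᶜ := by
    rwa [isEnclaveless_iff_isDominating_compl, compl_compl]
  rw [← compl_compl D, hS.2 Dᶜ (Finset.subset_compl_comm.mp hD) hDc]

theorem gameVal_eq_of_forall_isMaximalEnclaveless_card_eq [DecidableRel G.Adj] {c : ℕ}
    (b : Bool) {S : Finset V} (hS : IsEnclaveless G S)
    (hc : ∀ T, S ⊆ T → IsMaximalEnclaveless G T → T.card = c) :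
    gameVal G b S = c := by
  induction b, S using gameVal.induct G with
  | case1 S hplay ih =>
    rw [gameVal, dif_pos hplay, if_pos rfl]
    have hchild (v : playableSet G S) : gameVal G false (insert v.1 S) = c :=
      ih v (mem_playableSet.mp v.2).2 fun T hT => hc T ((Finset.subset_insert _ _).trans hT)
    simp only [hchild, Finset.sup'_const]
  | case2 b S hplay hb ih =>
    rw [gameVal, dif_pos hplay, if_neg hb]
    have hchild (v : playableSet G S) : gameVal G true (insert v.1 S) = c :=
      ih v (mem_playableSet.mp v.2).2 fun T hT => hc T ((Finset.subset_insert _ _).trans hT)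
    simp only [hchild, Finset.inf'_const]
  | case3 b S hstop =>
    rw [gameVal, dif_neg hstop]
    exact hc S subset_rfl (isMaximalEnclaveless_of_not_nonempty_playableSet hS hstop)

theorem IsMaximalEnclaveless.card_eq_of_wellDominated {S : Finset V}
    (hwd : ∀ D : Finset V, IsMinimalDominating G D → D.card = domNum G)
    (hS : IsMaximalEnclaveless G S) : S.card = Fintype.card V - domNum G := by
  rw [← hwd Sᶜ hS.isMinimalDominating_compl, Finset.card_compl,
    Nat.sub_sub_self (Finset.card_le_univ S)]

/-- If `G` is a well-dominated finite simple graph of order `n`, i.e. every minimal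
dominating set has cardinality `γ(G)`, then `Ψ⁻_g(G) = Ψ⁺_g(G) = n - γ(G)`. -/
theorem wellDominated_gameNums {V : Type*} [Fintype V] [DecidableEq V]
    (G : SimpleGraph V) [DecidableRel G.Adj]
    (hwd : ∀ D : Finset V, IsMinimalDominating G D → D.card = domNum G) :
    minStartGameNum G = Fintype.card V - domNum G ∧
    maxStartGameNum G = Fintype.card V - domNum G := by
  have hval (b : Bool) : gameVal G b ∅ = Fintype.card V - domNum G :=
    gameVal_eq_of_forall_isMaximalEnclaveless_card_eq b isEnclaveless_empty
      fun _ _ hT => hT.card_eq_of_wellDominated hwd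
  exact ⟨hval false, hval true⟩

end EnclavelessGame
end

section
/- If G is a finite simple graph of order n with no isolated vertex and maximum degree Δ, then n/(Δ+1) ≤ ψ(G) ≤ Ψ(G) ≤ Δn/(Δ+1); equivalently, (Δ+1)·ψ(G) ≥ n and (Δ+1)·Ψ(G) ≤ Δ·n, and ψ(G) ≤ Ψ(G). -/
theorem SimpleGraph.card_le_maxDegree_mul_card {V : Type*} [Fintype V] (G : SimpleGraph V)
    [DecidableRel G.Adj] {A B : Finset V} (h : ∀ a ∈ A, ∃ b ∈ B, G.Adj a b) :
    A.card ≤ G.maxDegree * B.card := by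
  have hA : ∀ a ∈ A, 1 ≤ (B.bipartiteAbove G.Adj a).card := fun a ha ↦ by
    obtain ⟨b, hb, hab⟩ := h a ha
    exact Finset.card_pos.2 ⟨b, Finset.mem_filter.2 ⟨hb, hab⟩⟩
  have hB : ∀ b ∈ B, (A.bipartiteBelow G.Adj b).card ≤ G.maxDegree := fun b _ ↦
    calc (A.bipartiteBelow G.Adj b).card ≤ (G.neighborFinset b).card :=
          Finset.card_le_card fun a ha ↦
            (G.mem_neighborFinset b a).2 (Finset.mem_filter.1 ha).2.symm
      _ ≤ G.maxDegree := G.card_neighborFinset_eq_degree b ▸ G.degree_le_maxDegree b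
  simpa [mul_comm] using Finset.card_mul_le_card_mul G.Adj hA hB

namespace EnclavelessGame

variable {V : Type*} {G : SimpleGraph V}

theorem IsEnclaveless.card_le [Fintype V] [DecidableEq V] [DecidableRel G.Adj] {S : Finset V}
    (hS : IsEnclaveless G S) :
    (G.maxDegree + 1) * S.card ≤ G.maxDegree * Fintype.card V := by
  have hS' : ∀ v ∈ S, ∃ u ∈ Sᶜ, G.Adj v u := fun v hv ↦ by
    obtain ⟨u, hvu, hu⟩ : ∃ u, G.Adj v u ∧ u ∉ S := by simpa [IsEnclave, hv] using hS v
    exact ⟨u, Finset.mem_compl.2 hu, hvu⟩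
  have hcount := G.card_le_maxDegree_mul_card hS'
  rw [Finset.card_compl] at hcount
  calc (G.maxDegree + 1) * S.card = G.maxDegree * S.card + S.card := by ring
    _ ≤ G.maxDegree * S.card + G.maxDegree * (Fintype.card V - S.card) := by omega
    _ = G.maxDegree * Fintype.card V := by rw [← mul_add, Nat.add_sub_cancel' S.card_le_univ]

theorem IsDominating.card_le [Fintype V] [DecidableEq V] [DecidableRel G.Adj] {D : Finset V}
    (hD : IsDominating G D) :
    Fintype.card V ≤ (G.maxDegree + 1) * D.card := by
  have hD' : ∀ v ∈ Dᶜ, ∃ u ∈ D, G.Adj v u := fun v hv ↦ by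
    obtain ⟨u, hu, rfl | huv⟩ := hD v
    · exact absurd hu (Finset.mem_compl.1 hv)
    · exact ⟨u, hu, huv.symm⟩
  have hcount := G.card_le_maxDegree_mul_card hD'
  rw [Finset.card_compl] at hcount
  calc Fintype.card V = D.card + (Fintype.card V - D.card) :=
        (Nat.add_sub_cancel' D.card_le_univ).symm
    _ ≤ D.card + G.maxDegree * D.card := by omega
    _ = (G.maxDegree + 1) * D.card := by ring

/-- Adding a vertex `v ∉ S` creates an enclave `w`: either `w = v`, and then a neighbor of `v`
lies in `S`, or `w ∈ S`, and then `v` is the neighbor that kept `w` from being an enclave of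
`S`. -/
theorem IsMaximalEnclaveless.isDominating [DecidableEq V] (hiso : ∀ v : V, ∃ u, G.Adj v u)
    {S : Finset V} (hS : IsMaximalEnclaveless G S) : IsDominating G S := by
  intro v
  by_cases hv : v ∈ S
  · exact ⟨v, hv, Or.inl rfl⟩
  have : ¬ IsEnclaveless G (insert v S) := fun h ↦
    hv (hS.2 _ (Finset.subset_insert v S) h ▸ Finset.mem_insert_self v S)
  obtain ⟨w, hw, hwN⟩ : ∃ w, IsEnclave G (insert v S) w := by
    simpa [IsEnclaveless] using this
  rcases Finset.mem_insert.1 hw with rfl | hwS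
  · obtain ⟨u, hu⟩ := hiso w
    have huS : u ∈ S := (Finset.mem_insert.1 (hwN u hu)).resolve_left hu.ne'
    exact ⟨u, huS, Or.inr hu.symm⟩
  · obtain ⟨u, hwu, huS⟩ : ∃ u, G.Adj w u ∧ u ∉ S := by
      simpa [IsEnclave, hwS] using hS.1 w
    obtain rfl : u = v := (Finset.mem_insert.1 (hwN u hwu)).resolve_right huS
    exact ⟨w, hwS, Or.inr hwu⟩

theorem exists_isMaximalEnclaveless_card_eq_enclavelessNum [Fintype V] (G : SimpleGraph V) :
    ∃ S : Finset V, IsMaximalEnclaveless G S ∧ S.card = enclavelessNum G := by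
  have hbdd : BddAbove {k | ∃ S : Finset V, IsEnclaveless G S ∧ S.card = k} :=
    ⟨Fintype.card V, fun _ ⟨S, _, hS⟩ ↦ hS ▸ S.card_le_univ⟩
  have hne : {k | ∃ S : Finset V, IsEnclaveless G S ∧ S.card = k}.Nonempty :=
    ⟨0, ∅, fun v hv ↦ Finset.notMem_empty v hv.1, Finset.card_empty⟩
  obtain ⟨S, hS, hcard⟩ := Nat.sSup_mem hne hbdd
  refine ⟨S, ⟨hS, fun T hST hT ↦ (Finset.eq_of_subset_of_card_le hST ?_).symm⟩, hcard⟩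
  exact hcard ▸ le_csSup hbdd ⟨T, hT, rfl⟩

/-- If `G` is an isolate-free finite simple graph of order `n` with maximum degree `Δ`,
then `n/(Δ+1) ≤ ψ(G) ≤ Ψ(G) ≤ Δn/(Δ+1)`, i.e. `(Δ+1)·ψ(G) ≥ n`, `ψ(G) ≤ Ψ(G)` and
`(Δ+1)·Ψ(G) ≤ Δ·n`. -/
theorem lowerEnclaveless_enclaveless_bounds {V : Type*} [Fintype V] [DecidableEq V]
    (G : SimpleGraph V) [DecidableRel G.Adj]
    (hiso : ∀ v : V, ∃ u, G.Adj v u) :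
    Fintype.card V ≤ (G.maxDegree + 1) * lowerEnclavelessNum G ∧
    lowerEnclavelessNum G ≤ enclavelessNum G ∧
    (G.maxDegree + 1) * enclavelessNum G ≤ G.maxDegree * Fintype.card V := by
  obtain ⟨S, hS, hScard⟩ := exists_isMaximalEnclaveless_card_eq_enclavelessNum G
  have hne : {k | ∃ T : Finset V, IsMaximalEnclaveless G T ∧ T.card = k}.Nonempty :=
    ⟨S.card, S, hS, rfl⟩
  obtain ⟨T, hT, hTcard⟩ := Nat.sInf_mem hne
  have hψ : lowerEnclavelessNum G = T.card := hTcard.symm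
  rw [← hScard, hψ]
  exact ⟨(hT.isDominating hiso).card_le, hψ ▸ Nat.sInf_le ⟨S, hS, rfl⟩, hS.1.card_le⟩

end EnclavelessGame
end

section
/- If G is a k-regular finite simple graph of order n with k ≥ 1, then the upper domination number satisfies Γ(G) ≤ n/2, i.e., 2·Γ(G) ≤ n. -/
theorem SimpleGraph.IsRegularOfDegree.card_le_card_of_neighborFinset_subset {V : Type*}
    [Fintype V] {G : SimpleGraph V} [DecidableRel G.Adj] {k : ℕ}
    (hreg : G.IsRegularOfDegree k) (hk : 0 < k) {B X : Finset V}
    (hBX : ∀ v ∈ B, G.neighborFinset v ⊆ X) : B.card ≤ X.card := by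
  have hdouble : B.card * k ≤ X.card * k := by
    refine Finset.card_mul_le_card_mul G.Adj (fun v hv => ?_) (fun w _ => ?_)
    · have : X.bipartiteAbove G.Adj v = G.neighborFinset v := by
        ext w
        simpa [Finset.bipartiteAbove] using fun hvw => hBX v hv (by simpa using hvw)
      rw [this, G.card_neighborFinset_eq_degree, hreg v]
    · calc (B.bipartiteBelow G.Adj w).card ≤ (G.neighborFinset w).card :=
            Finset.card_le_card fun v hv => by
              simpa [Finset.bipartiteBelow, G.adj_comm] using (Finset.mem_filter.1 hv).2
        _ = k := by rw [G.card_neighborFinset_eq_degree, hreg w]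
  exact Nat.le_of_mul_le_mul_right hdouble hk

namespace EnclavelessGame

open Finset

variable {V : Type*} {G : SimpleGraph V} {D : Finset V}

theorem IsMinimalDominating.exists_privateNeighbor {v : V} (hD : IsMinimalDominating G D)
    (hv : v ∈ D) : ∃ w, (v = w ∨ G.Adj v w) ∧ ∀ u ∈ D, (u = w ∨ G.Adj u w) → u = v := by
  classical
  have hnot : ¬ IsDominating G (D.erase v) := fun h => by
    simpa using (hD.2 _ (erase_subset v D) h).ge hv
  obtain ⟨w, hw⟩ : ∃ w, ∀ u ∈ D, (u = w ∨ G.Adj u w) → u = v := by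
    by_contra! h
    exact hnot fun w =>
      let ⟨u, hu, huw, huv⟩ := h w
      ⟨u, mem_erase.2 ⟨huv, hu⟩, huw⟩
  obtain ⟨u, hu, huw⟩ := hD.1 w
  exact ⟨w, hw u hu huw ▸ huw, hw⟩

theorem IsMinimalDominating.exists_external_privateNeighbor {v u : V}
    (hD : IsMinimalDominating G D) (hv : v ∈ D) (hu : u ∈ D) (hvu : G.Adj v u) :
    ∃ w ∉ D, G.Adj v w ∧ ∀ u ∈ D, G.Adj u w → u = v := by
  obtain ⟨w, hvw, hpriv⟩ := hD.exists_privateNeighbor hv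
  -- `w ∈ D` would dominate itself, forcing `w = v`; but `u` also dominates `v`
  have hwD : w ∉ D := fun hwD => by
    obtain rfl := hpriv w hwD (Or.inl rfl)
    exact G.ne_of_adj hvu (hpriv u hu (Or.inr hvu.symm)).symm
  exact ⟨w, hwD, hvw.resolve_left fun h => hwD (h ▸ hv), fun u hu huw => hpriv u hu (Or.inr huw)⟩

/-- Split `D` into the isolated vertices `B` of `G[D]`, whose neighbourhoods lie in `Dᶜ`, and the
rest, each owning an external private neighbour. By regularity `B` is no larger than its
neighbourhood `N`, and no external private neighbour lies in `N`. -/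
theorem IsMinimalDominating.two_mul_card_le [Fintype V] [DecidableRel G.Adj] {k : ℕ}
    (hD : IsMinimalDominating G D) (hreg : G.IsRegularOfDegree k) (hk : 0 < k) :
    2 * D.card ≤ Fintype.card V := by
  classical
  set B := D.filter fun v => ∀ u ∈ D, ¬ G.Adj v u
  set A := D.filter fun v => ¬ ∀ u ∈ D, ¬ G.Adj v u
  set N := Dᶜ.filter fun w => ∃ b ∈ B, G.Adj b w
  set P := Dᶜ.filter fun w => ¬ ∃ b ∈ B, G.Adj b w
  have hB : B.card ≤ N.card := by
    refine hreg.card_le_card_of_neighborFinset_subset hk fun b hb w hbw => ?_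
    rw [SimpleGraph.mem_neighborFinset] at hbw
    exact mem_filter.2 ⟨mem_compl.2 fun hwD => (mem_filter.1 hb).2 w hwD hbw, b, hb, hbw⟩
  have hA : A.card ≤ P.card := by
    have hext : ∀ a ∈ A, ∃ w ∉ D, G.Adj a w ∧ ∀ u ∈ D, G.Adj u w → u = a := fun a ha => by
      obtain ⟨haD, hnb⟩ := mem_filter.1 ha
      push Not at hnb
      obtain ⟨u, hu, hau⟩ := hnb
      exact hD.exists_external_privateNeighbor haD hu hau
    choose! p hpD hap hpriv using hext
    refine card_le_card_of_injOn p (fun a ha => ?_) (fun a ha a' ha' h => ?_)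
    · refine mem_filter.2 ⟨mem_compl.2 (hpD a ha), ?_⟩
      rintro ⟨b, hb, hbp⟩
      obtain rfl := hpriv a ha b (mem_filter.1 hb).1 hbp
      exact (mem_filter.1 ha).2 (mem_filter.1 hb).2
    · exact hpriv a' ha' a (mem_filter.1 ha).1 (h ▸ hap a ha)
  have hD_split : B.card + A.card = D.card := card_filter_add_card_filter_not _
  have hDc_split : N.card + P.card = Dᶜ.card := card_filter_add_card_filter_not _
  have hcompl := card_add_card_compl D
  omega

theorem upperDomNum_le [Fintype V] {m : ℕ} (h : ∀ D, IsMinimalDominating G D → D.card ≤ m) :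
    upperDomNum G ≤ m :=
  csSup_le' fun _ ⟨D, hD, hcard⟩ => hcard ▸ h D hD

theorem regular_upperDomNum_le_general {V : Type*} [Fintype V]
    (G : SimpleGraph V) [DecidableRel G.Adj] (k : ℕ) (hk : 1 ≤ k)
    (hreg : G.IsRegularOfDegree k) :
    2 * upperDomNum G ≤ Fintype.card V := by
  have : upperDomNum G ≤ Fintype.card V / 2 := upperDomNum_le fun D hD =>
    (Nat.le_div_iff_mul_le two_pos).2 <| by rw [mul_comm]; exact hD.two_mul_card_le hreg hk
  omega

/-- If `G` is a `k`-regular finite simple graph of order `n` with `k ≥ 1`, then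
`Γ(G) ≤ n/2`, i.e. `2·Γ(G) ≤ n`. -/
theorem regular_upperDomNum_le {V : Type*} [Fintype V] [DecidableEq V]
    (G : SimpleGraph V) [DecidableRel G.Adj] (k : ℕ) (hk : 1 ≤ k)
    (hreg : G.IsRegularOfDegree k) :
    2 * upperDomNum G ≤ Fintype.card V :=
  regular_upperDomNum_le_general G k hk hreg

end EnclavelessGame
end

section
/- Let k be a positive integer. If G is a finite simple graph of order n with minimum degree at least k and with no induced subgraph isomorphic to the star K_{1,k+1}, then the upper domination number satisfies Γ(G) ≤ n/2, i.e., 2·Γ(G) ≤ n. -/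
namespace EnclavelessGame

variable {V : Type*} [Fintype V] [DecidableEq V]

section Domination

variable {G : SimpleGraph V} [DecidableRel G.Adj] {k : ℕ}

/-- Double counting the edges between `S` and its neighbourhood: each vertex of `S` sends at
least `k` of them, and each neighbour receives at most `k`, since its neighbours in `S` are
independent. -/
lemma card_le_card_biUnion_neighborFinset (hk : 0 < k)
    (hstar : ¬ ∃ (v : V) (T : Finset V), T.card = k + 1 ∧ (∀ u ∈ T, G.Adj v u) ∧
        ∀ a ∈ T, ∀ b ∈ T, a ≠ b → ¬ G.Adj a b)
    {S : Finset V} (hS : G.IsIndepSet S) (hdeg : ∀ v ∈ S, k ≤ G.degree v) :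
    S.card ≤ (S.biUnion fun v => G.neighborFinset v).card := by
  set N := S.biUnion fun v => G.neighborFinset v
  have hindep : ∀ b : V, (S.bipartiteBelow G.Adj b).card ≤ k := by
    intro b
    by_contra! hlt
    obtain ⟨T, hTS, hT⟩ := Finset.exists_subset_card_eq hlt
    have hTS' : ∀ a ∈ T, a ∈ S ∧ G.Adj a b := fun a ha =>
      (Finset.mem_bipartiteBelow G.Adj).1 (hTS ha)
    exact hstar ⟨b, T, hT, fun a ha => (hTS' a ha).2.symm,
      fun a ha a' ha' => hS (hTS' a ha).1 (hTS' a' ha').1⟩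
  refine Nat.le_of_mul_le_mul_right (Finset.card_mul_le_card_mul G.Adj (fun a ha => ?_)
    fun b _ => hindep b) hk
  calc k ≤ G.degree a := hdeg a ha
    _ ≤ (N.bipartiteAbove G.Adj a).card := Finset.card_le_card fun u hu =>
        (Finset.mem_bipartiteAbove G.Adj).2
          ⟨Finset.mem_biUnion.2 ⟨a, ha, hu⟩, (G.mem_neighborFinset _ _).1 hu⟩

variable (G) in
def externalPrivateNeighbors (D : Finset V) (v : V) : Finset V :=
  {u | u ∉ D ∧ G.Adj v u ∧ ∀ w ∈ D, G.Adj w u → w = v}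

variable {D : Finset V}

lemma mem_externalPrivateNeighbors {v u : V} :
    u ∈ externalPrivateNeighbors G D v ↔
      u ∉ D ∧ G.Adj v u ∧ ∀ w ∈ D, G.Adj w u → w = v := by
  simp [externalPrivateNeighbors]

lemma disjoint_externalPrivateNeighbors {v v' : V} (hv : v ∈ D) (hvv' : v ≠ v') :
    Disjoint (externalPrivateNeighbors G D v) (externalPrivateNeighbors G D v') := by
  refine Finset.disjoint_left.2 fun u hu hu' => hvv' ?_
  exact (mem_externalPrivateNeighbors.1 hu').2.2 v hv (mem_externalPrivateNeighbors.1 hu).2.1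

/-- A vertex of `D` with a neighbour in `D` dominates itself redundantly, so what `D.erase v`
fails to dominate is an external private neighbour of `v`. -/
lemma IsMinimalDominating.externalPrivateNeighbors_nonempty (hD : IsMinimalDominating G D)
    {v w : V} (hv : v ∈ D) (hw : w ∈ D) (hvw : G.Adj v w) :
    (externalPrivateNeighbors G D v).Nonempty := by
  have hnot : ¬ IsDominating G (D.erase v) := fun h =>
    Finset.erase_eq_self.1 (hD.2 _ (Finset.erase_subset v D) h) hv
  simp only [IsDominating, not_forall, Finset.mem_erase, not_exists, not_and, not_or,
    and_imp] at hnot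
  obtain ⟨u, hu⟩ := hnot
  obtain ⟨x, hxD, hxu⟩ := hD.1 u
  obtain rfl : x = v := by
    by_contra hxv
    exact hxu.elim (hu x hxv hxD).1 (hu x hxv hxD).2
  have hwv : w ≠ x := (G.ne_of_adj hvw).symm
  have hux : G.Adj x u := hxu.resolve_left fun hxu => (hu w hwv hw).2 (hxu ▸ hvw.symm)
  refine ⟨u, mem_externalPrivateNeighbors.2 ⟨fun huD => ?_, hux, fun y hyD hyu => ?_⟩⟩
  · exact (hu u (G.ne_of_adj hux).symm huD).1 rfl
  · by_contra hyx
    exact (hu y hyx hyD).2 hyu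

/-- The vertices of `D` with a neighbour in `D` are matched injectively to their external private
neighbours; the remaining vertices of `D` form an independent set, handled by double counting.
The two neighbourhoods obtained are disjoint parts of `Dᶜ`. -/
lemma IsMinimalDominating.card_le_card_compl (hk : 0 < k) (hdeg : ∀ v : V, k ≤ G.degree v)
    (hstar : ¬ ∃ (v : V) (T : Finset V), T.card = k + 1 ∧ (∀ u ∈ T, G.Adj v u) ∧
        ∀ a ∈ T, ∀ b ∈ T, a ≠ b → ¬ G.Adj a b)
    (hD : IsMinimalDominating G D) : D.card ≤ Dᶜ.card := by
  set D₁ := D.filter fun v => ∃ w ∈ D, G.Adj v w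
  set D₀ := D.filter fun v => ¬ ∃ w ∈ D, G.Adj v w
  set U₁ := D₁.biUnion (externalPrivateNeighbors G D)
  set U₂ := D₀.biUnion fun v => G.neighborFinset v
  have hD₀ : G.IsIndepSet D₀ := fun a ha b hb _ hab =>
    (Finset.mem_filter.1 ha).2 ⟨b, (Finset.mem_filter.1 hb).1, hab⟩
  have hU₂ : ∀ u ∈ U₂, ∃ b ∈ D₀, G.Adj b u := fun u hu => by
    obtain ⟨b, hb, hbu⟩ := Finset.mem_biUnion.1 hu
    exact ⟨b, hb, (G.mem_neighborFinset _ _).1 hbu⟩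
  have hcard₁ : D₁.card ≤ U₁.card := by
    refine Finset.card_le_card_biUnion
      (fun a ha a' _ haa' => disjoint_externalPrivateNeighbors (Finset.mem_filter.1 ha).1 haa') ?_
    intro a ha
    obtain ⟨haD, w, hwD, haw⟩ := Finset.mem_filter.1 ha
    exact hD.externalPrivateNeighbors_nonempty haD hwD haw
  have hcard₂ : D₀.card ≤ U₂.card :=
    card_le_card_biUnion_neighborFinset hk hstar hD₀ fun v _ => hdeg v
  have hdisj : Disjoint U₁ U₂ := by
    refine Finset.disjoint_left.2 fun u hu₁ hu₂ => ?_
    obtain ⟨a, ha, hua⟩ := Finset.mem_biUnion.1 hu₁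
    obtain ⟨b, hb, hbu⟩ := hU₂ u hu₂
    obtain rfl := (mem_externalPrivateNeighbors.1 hua).2.2 b (Finset.mem_filter.1 hb).1 hbu
    exact (Finset.mem_filter.1 hb).2 (Finset.mem_filter.1 ha).2
  have hsub : U₁ ∪ U₂ ⊆ Dᶜ := by
    intro u hu
    rw [Finset.mem_compl]
    rcases Finset.mem_union.1 hu with hu₁ | hu₂
    · obtain ⟨a, _, hua⟩ := Finset.mem_biUnion.1 hu₁
      exact (mem_externalPrivateNeighbors.1 hua).1
    · obtain ⟨b, hb, hbu⟩ := hU₂ u hu₂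
      exact fun huD => (Finset.mem_filter.1 hb).2 ⟨u, huD, hbu⟩
  calc D.card = D₁.card + D₀.card := (Finset.card_filter_add_card_filter_not _).symm
    _ ≤ U₁.card + U₂.card := Nat.add_le_add hcard₁ hcard₂
    _ = (U₁ ∪ U₂).card := (Finset.card_union_of_disjoint hdisj).symm
    _ ≤ Dᶜ.card := Finset.card_le_card hsub

end Domination

theorem starFree_upperDomNum_le_general {V : Type*} [Fintype V]
    (G : SimpleGraph V) [DecidableRel G.Adj] (k : ℕ) (hk : 1 ≤ k)
    (hdeg : ∀ v : V, k ≤ G.degree v)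
    (hstar : ¬ ∃ (v : V) (T : Finset V), T.card = k + 1 ∧ (∀ u ∈ T, G.Adj v u) ∧
        ∀ a ∈ T, ∀ b ∈ T, a ≠ b → ¬ G.Adj a b) :
    2 * upperDomNum G ≤ Fintype.card V := by
  classical
  have hhalf : upperDomNum G ≤ Fintype.card V / 2 := csSup_le' fun _ ⟨D, hD, hcard⟩ => by
    have hcompl := hD.card_le_card_compl hk hdeg hstar
    have hsum := D.card_add_card_compl
    omega
  omega

/-- Let `k` be a positive integer. If `G` is a finite simple graph of order `n` with
minimum degree at least `k` and no induced `K_{1,k+1}` (no vertex has `k+1` pairwise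
non-adjacent neighbors), then `Γ(G) ≤ n/2`, i.e. `2·Γ(G) ≤ n`. -/
theorem starFree_upperDomNum_le {V : Type*} [Fintype V] [DecidableEq V]
    (G : SimpleGraph V) [DecidableRel G.Adj] (k : ℕ) (hk : 1 ≤ k)
    (hdeg : ∀ v : V, k ≤ G.degree v)
    (hstar : ¬ ∃ (v : V) (T : Finset V), T.card = k + 1 ∧ (∀ u ∈ T, G.Adj v u) ∧
        ∀ a ∈ T, ∀ b ∈ T, a ≠ b → ¬ G.Adj a b) :
    2 * upperDomNum G ≤ Fintype.card V :=
  starFree_upperDomNum_le_general G k hk hdeg hstar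

end EnclavelessGame
end

section
/- If G is a connected claw-free finite simple graph of order n with minimum degree at least 2, then the independence number satisfies α(G) ≤ 2n/(δ+2), where δ is the minimum degree of G; equivalently, (δ+2)·α(G) ≤ 2n. -/
namespace EnclavelessGame

variable {V : Type*} [Fintype V] [DecidableEq V]

/-- `S` is an independent set: no two of its vertices are adjacent. -/
def IsIndependent (G : SimpleGraph V) (S : Finset V) : Prop :=
  ∀ a ∈ S, ∀ b ∈ S, ¬ G.Adj a b

/-- The independence number `α(G)`: maximum cardinality of an independent set. -/
noncomputable def indepNum (G : SimpleGraph V) : ℕ :=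
  sSup {k | ∃ S : Finset V, IsIndependent G S ∧ S.card = k}

/-- `G` is claw-free: it contains no induced `K_{1,3}`, i.e. no vertex has three
pairwise non-adjacent neighbors. -/
def ClawFree (G : SimpleGraph V) : Prop :=
  ¬ ∃ (v : V) (T : Finset V), T.card = 3 ∧ (∀ u ∈ T, G.Adj v u) ∧
      ∀ a ∈ T, ∀ b ∈ T, a ≠ b → ¬ G.Adj a b

end EnclavelessGame

/-!
Double counting the edges between a maximum independent set `S` and its complement:
each vertex of `S` sends at least `δ` edges out of `S`, and by claw-freeness each vertex
outside `S` receives at most two of them, so `δ·|S| ≤ 2·(n - |S|)`.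
-/

namespace EnclavelessGame

open Finset

variable {V : Type*} {G : SimpleGraph V} {S : Finset V}

theorem exists_isIndependent_card_eq_indepNum [Fintype V] (G : SimpleGraph V) :
    ∃ S : Finset V, IsIndependent G S ∧ S.card = indepNum G :=
  Nat.sSup_mem (s := {k | ∃ S : Finset V, IsIndependent G S ∧ S.card = k})
    ⟨0, ∅, by simp [IsIndependent]⟩
    ⟨Fintype.card V, by rintro _ ⟨S, -, rfl⟩; exact S.card_le_univ⟩

theorem IsIndependent.filter_adj_compl_eq_neighborFinset [Fintype V] [DecidableEq V]
    [DecidableRel G.Adj] (hS : IsIndependent G S) {s : V} (hs : s ∈ S) :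
    {v ∈ Sᶜ | G.Adj s v} = G.neighborFinset s := by
  ext v
  simp only [mem_filter, mem_compl, SimpleGraph.mem_neighborFinset]
  exact ⟨And.right, fun hsv => ⟨fun hv => hS s hs v hv hsv, hsv⟩⟩

theorem ClawFree.card_filter_adj_le_two [DecidableRel G.Adj] (hclaw : ClawFree G)
    (hS : IsIndependent G S) (v : V) : #{s ∈ S | G.Adj s v} ≤ 2 := by
  by_contra! h
  obtain ⟨T, hTS, hT⟩ := exists_subset_card_eq (Nat.succ_le_of_lt h)
  have hT' : ∀ u ∈ T, u ∈ S ∧ G.Adj u v := fun u hu => mem_filter.mp (hTS hu)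
  exact hclaw ⟨v, T, hT, fun u hu => (hT' u hu).2.symm,
    fun a ha b hb _ => hS a (hT' a ha).1 b (hT' b hb).1⟩

theorem ClawFree.minDegree_mul_card_le_two_mul_card_compl [Fintype V] [DecidableEq V]
    [DecidableRel G.Adj] (hclaw : ClawFree G) (hS : IsIndependent G S) :
    G.minDegree * #S ≤ 2 * #Sᶜ := by
  rw [mul_comm, mul_comm 2]
  refine card_mul_le_card_mul G.Adj (fun s hs => ?_)
    (fun v _ => ClawFree.card_filter_adj_le_two hclaw hS v)
  rw [bipartiteAbove, hS.filter_adj_compl_eq_neighborFinset hs,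
    SimpleGraph.card_neighborFinset_eq_degree]
  exact G.minDegree_le_degree s

theorem clawFree_indepNum_le_general {V : Type*} [Fintype V] [DecidableEq V]
    (G : SimpleGraph V) [DecidableRel G.Adj]
    (hclaw : ClawFree G) :
    (G.minDegree + 2) * indepNum G ≤ 2 * Fintype.card V := by
  obtain ⟨S, hS, hcard⟩ := exists_isIndependent_card_eq_indepNum G
  have hdouble := ClawFree.minDegree_mul_card_le_two_mul_card_compl hclaw hS
  have hsplit : S.card + Sᶜ.card = Fintype.card V := S.card_add_card_compl
  rw [← hcard]
  linarith

/-- If `G` is a connected claw-free finite simple graph of order `n` with minimum degree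
`δ ≥ 2`, then `α(G) ≤ 2n/(δ+2)`, i.e. `(δ+2)·α(G) ≤ 2n`. -/
theorem clawFree_indepNum_le {V : Type*} [Fintype V] [DecidableEq V]
    (G : SimpleGraph V) [DecidableRel G.Adj]
    (hconn : G.Connected) (hclaw : ClawFree G) (hdeg : 2 ≤ G.minDegree) :
    (G.minDegree + 2) * indepNum G ≤ 2 * Fintype.card V :=
  clawFree_indepNum_le_general G hclaw

end EnclavelessGame
end

section
/- If G is a connected claw-free finite simple graph of order n ≥ 1, then the upper irredundance number satisfies IR(G) ≤ (n+1)/2, i.e., 2·IR(G) ≤ n + 1. -/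
/-!
Let `S` be irredundant and let `A ⊆ S` be the vertices with no neighbour in `S`. Every
`b ∈ S \ A` has a private neighbour outside `S`, and these are distinct, so
`n = #S + #(S \ A) + #X` for the set `X` of the remaining vertices; it remains to show
`#A ≤ #X + 1`. Now `A` is independent and all its neighbours lie in `X`. Grow a vertex set `D`
from a vertex of `A` along edges of `G`: adding a vertex `x` brings at most one new vertex of `A`
into the closed neighbourhood `N[D]`, since two would form a claw at `x` with a neighbour of `x`
in `D`, and it brings none unless `x ∈ X`. Hence `#(A ∩ N[D]) ≤ #(D ∩ X) + 1` throughout, and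
`D = V` gives the bound.
-/

open Finset

namespace EnclavelessGame

variable {V : Type*} [Fintype V] [DecidableEq V]

/-- `S` is irredundant: every `v ∈ S` has an `S`-private neighbor, i.e. a vertex `w`
with `N[w] ∩ S = {v}`. -/
def IsIrredundant (G : SimpleGraph V) (S : Finset V) : Prop :=
  ∀ v ∈ S, ∃ w, (w = v ∨ G.Adj w v) ∧ ∀ u ∈ S, (u = w ∨ G.Adj u w) → u = v

/-- The upper irredundance number `IR(G)`: maximum cardinality of an irredundant set. -/
noncomputable def irNum (G : SimpleGraph V) : ℕ :=
  sSup {k | ∃ S : Finset V, IsIrredundant G S ∧ S.card = k}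

end EnclavelessGame

namespace SimpleGraph

variable {V : Type*} {G : SimpleGraph V}

theorem Preconnected.exists_adj_of_mem_of_notMem (hG : G.Preconnected) {s : Set V} {u v : V}
    (hu : u ∈ s) (hv : v ∉ s) : ∃ x ∉ s, ∃ y ∈ s, G.Adj x y := by
  obtain ⟨d, -, hd₁, hd₂⟩ := (hG u v).some.exists_boundary_dart s hu hv
  exact ⟨d.snd, hd₂, d.fst, hd₁, d.adj.symm⟩

theorem Connected.induction_insert_adj [Fintype V] [DecidableEq V] {p : Finset V → Prop}
    (hG : G.Connected) {D : Finset V} (hD : D.Nonempty) (hpD : p D)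
    (step : ∀ D x y, x ∉ D → y ∈ D → G.Adj x y → p D → p (insert x D)) : p univ := by
  induction hc : #Dᶜ generalizing D with
  | zero =>
    rw [card_eq_zero, compl_eq_empty_iff] at hc
    exact hc ▸ hpD
  | succ k ih =>
    obtain ⟨u, hu⟩ := hD
    obtain ⟨v, hv⟩ : Dᶜ.Nonempty := card_pos.mp (by omega)
    obtain ⟨x, hx, y, hy, hxy⟩ :=
      hG.preconnected.exists_adj_of_mem_of_notMem (s := ↑D) hu (mem_compl.mp hv)
    refine ih (insert_nonempty x D) (step D x y hx hy hxy hpD) ?_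
    rw [compl_insert, card_erase_of_mem (mem_compl.mpr hx), hc, Nat.add_sub_cancel]

noncomputable def closedNbhdFinset [Fintype V] (G : SimpleGraph V) (D : Finset V) : Finset V := by
  classical exact {a | ∃ d ∈ D, a = d ∨ G.Adj d a}

theorem mem_closedNbhdFinset [Fintype V] {D : Finset V} {a : V} :
    a ∈ G.closedNbhdFinset D ↔ ∃ d ∈ D, a = d ∨ G.Adj d a := by
  simp [closedNbhdFinset]

end SimpleGraph

namespace EnclavelessGame

open SimpleGraph

variable {V : Type*} {G : SimpleGraph V}

theorem ClawFree.adj_or_adj_or_adj {v a b c : V} (hG : ClawFree G) (ha : G.Adj v a) (hb : G.Adj v b)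
    (hc : G.Adj v c) (hab : a ≠ b) (hac : a ≠ c) (hbc : b ≠ c) :
    G.Adj a b ∨ G.Adj a c ∨ G.Adj b c := by
  classical
  by_contra! h
  obtain ⟨hab', hac', hbc'⟩ := h
  refine hG ⟨v, {a, b, c}, card_eq_three.mpr ⟨a, b, c, hab, hac, hbc, rfl⟩, ?_, ?_⟩
  · simp only [mem_insert, mem_singleton]
    rintro u (rfl | rfl | rfl) <;> assumption
  · simp only [mem_insert, mem_singleton]
    rintro x (rfl | rfl | rfl) y (rfl | rfl | rfl) hxy <;>
      simp_all [G.adj_comm]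

section IndepSet

variable [Fintype V] [DecidableEq V] {A X : Finset V}

theorem card_inter_closedNbhdFinset_insert_le (hclaw : ClawFree G)
    (hA : G.IsIndepSet (A : Set V)) (hAX : ∀ a ∈ A, ∀ z, G.Adj a z → z ∈ X) {D : Finset V}
    {x y : V} (hx : x ∉ D) (hy : y ∈ D) (hxy : G.Adj x y)
    (hD : #(A ∩ G.closedNbhdFinset D) ≤ #(D ∩ X) + 1) :
    #(A ∩ G.closedNbhdFinset (insert x D)) ≤ #(insert x D ∩ X) + 1 := by
  set new := (A ∩ G.closedNbhdFinset (insert x D)) \ (A ∩ G.closedNbhdFinset D)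
  have hnew : ∀ a ∈ new, a ∈ A ∧ G.Adj x a ∧ a ∉ G.closedNbhdFinset D := by
    intro a ha
    simp only [new, mem_sdiff, mem_inter, mem_closedNbhdFinset, mem_insert] at ha
    obtain ⟨⟨haA, d, hd | hd, had⟩, hold⟩ := ha
    · subst hd
      rcases had with rfl | had
      · exact absurd ⟨haA, y, hy, Or.inr hxy.symm⟩ hold
      · exact ⟨haA, had, fun h => hold ⟨haA, mem_closedNbhdFinset.mp h⟩⟩
    · exact absurd ⟨haA, d, hd, had⟩ hold
  have hcard : #(A ∩ G.closedNbhdFinset (insert x D)) ≤ #new + #(A ∩ G.closedNbhdFinset D) :=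
    card_le_card_sdiff_add_card
  by_cases hxX : x ∈ X
  · have hnew_le : #new ≤ 1 := by
      refine card_le_one.mpr fun a ha b hb => by_contra fun hab => ?_
      obtain ⟨haA, hxa, ha⟩ := hnew a ha
      obtain ⟨hbA, hxb, hb⟩ := hnew b hb
      have hyN : ∀ z, z = y ∨ G.Adj y z → z ∈ G.closedNbhdFinset D := fun z h =>
        mem_closedNbhdFinset.mpr ⟨y, hy, h⟩
      rcases hclaw.adj_or_adj_or_adj hxa hxb hxy hab (fun h => ha (hyN a (.inl h)))
        (fun h => hb (hyN b (.inl h))) with h | h | h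
      · exact hA haA hbA hab h
      · exact ha (hyN a (.inr h.symm))
      · exact hb (hyN b (.inr h.symm))
    rw [insert_inter_of_mem hxX, card_insert_of_notMem fun h => hx (mem_of_mem_inter_left h)]
    omega
  · have hnew_empty : new = ∅ :=
      eq_empty_of_forall_notMem fun a ha => hxX (hAX a (hnew a ha).1 x (hnew a ha).2.1.symm)
    rw [insert_inter_of_notMem hxX]
    rw [hnew_empty, card_empty, zero_add] at hcard
    exact hcard.trans hD

theorem card_le_card_add_one_of_isIndepSet (hconn : G.Connected) (hclaw : ClawFree G)
    (hA : G.IsIndepSet (A : Set V)) (hAX : ∀ a ∈ A, ∀ z, G.Adj a z → z ∈ X) :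
    #A ≤ #X + 1 := by
  obtain rfl | ⟨a, ha⟩ := A.eq_empty_or_nonempty
  · simp
  have hbase : #(A ∩ G.closedNbhdFinset {a}) ≤ #({a} ∩ X) + 1 := by
    refine (card_le_one.mpr fun b hb c hc => ?_).trans (Nat.le_add_left 1 _)
    have h_eq_a : ∀ d ∈ A ∩ G.closedNbhdFinset {a}, d = a := by
      intro d hd
      simp only [mem_inter, mem_closedNbhdFinset, mem_singleton, exists_eq_left] at hd
      obtain ⟨hdA, hda | had⟩ := hd
      · exact hda
      · by_contra hne
        exact hA ha hdA (Ne.symm hne) had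
    rw [h_eq_a b hb, h_eq_a c hc]
  have huniv := hconn.induction_insert_adj
    (p := fun D => #(A ∩ G.closedNbhdFinset D) ≤ #(D ∩ X) + 1) (singleton_nonempty a) hbase
    fun D x y hx hy hxy => card_inter_closedNbhdFinset_insert_le hclaw hA hAX hx hy hxy
  have hN : G.closedNbhdFinset univ = univ :=
    eq_univ_of_forall fun b => mem_closedNbhdFinset.mpr ⟨b, mem_univ b, Or.inl rfl⟩
  simpa only [hN, inter_univ, univ_inter] using huniv

end IndepSet

theorem IsIrredundant.exists_private_notMem {S : Finset V} (hS : IsIrredundant G S) {u v : V}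
    (hu : u ∈ S) (hv : v ∈ S) (huv : G.Adj u v) :
    ∃ w ∉ S, G.Adj w v ∧ ∀ u ∈ S, G.Adj u w → u = v := by
  obtain ⟨w, hw, hpriv⟩ := hS v hv
  have hwS : w ∉ S := fun hwS => by
    obtain rfl := hpriv w hwS (Or.inl rfl)
    obtain rfl := hpriv u hu (Or.inr huv)
    exact G.loopless.irrefl u huv
  refine ⟨w, hwS, hw.resolve_left ?_, fun u hu h => hpriv u hu (Or.inr h)⟩
  rintro rfl
  exact hwS hv

theorem IsIrredundant.two_mul_card_le [Fintype V] (hconn : G.Connected) (hclaw : ClawFree G)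
    {S : Finset V} (hS : IsIrredundant G S) : 2 * #S ≤ Fintype.card V + 1 := by
  classical
  set A := S.filter fun v => ∀ u ∈ S, ¬G.Adj u v
  set B := S \ A
  have hB : ∀ b ∈ B, ∃ w ∉ S, G.Adj w b ∧ ∀ u ∈ S, G.Adj u w → u = b := by
    intro b hb
    obtain ⟨hbS, hbA⟩ := mem_sdiff.mp hb
    obtain ⟨u, huS, hub⟩ : ∃ u ∈ S, G.Adj u b := by
      by_contra! h
      exact hbA (mem_filter.mpr ⟨hbS, h⟩)
    exact hS.exists_private_notMem huS hbS hub
  choose! f hfS hfadj hfpriv using hB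
  have hBS : B ⊆ S := sdiff_subset
  have hf_inj : Set.InjOn f B := fun b hb b' hb' h =>
    hfpriv b' hb' b (hBS hb) (h ▸ (hfadj b hb).symm)
  have hdisj : Disjoint S (B.image f) := by
    rw [disjoint_right]
    rintro _ hw
    obtain ⟨b, hb, rfl⟩ := mem_image.mp hw
    exact hfS b hb
  have hA : G.IsIndepSet (A : Set V) := fun a ha b hb _ hab =>
    (mem_filter.mp hb).2 a (mem_filter.mp ha).1 hab
  have hAX : ∀ a ∈ A, ∀ z, G.Adj a z → z ∈ (S ∪ B.image f)ᶜ := by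
    intro a ha z haz
    obtain ⟨haS, ha_iso⟩ := mem_filter.mp ha
    simp only [mem_compl, mem_union, mem_image, not_or, not_exists, not_and]
    refine ⟨fun hzS => ha_iso z hzS haz.symm, ?_⟩
    rintro b hb rfl
    obtain rfl := hfpriv b hb a haS haz
    exact (mem_sdiff.mp hb).2 ha
  have hAcard := card_le_card_add_one_of_isIndepSet hconn hclaw hA hAX
  have hAB : #B + #A = #S := card_sdiff_add_card_eq_card (filter_subset _ _)
  have hSfB : #(S ∪ B.image f) = #S + #B := by
    rw [card_union_of_disjoint hdisj, card_image_of_injOn hf_inj]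
  have hcompl := card_add_card_compl (S ∪ B.image f)
  omega

theorem clawFree_irNum_le_general {V : Type*} [Fintype V]
    (G : SimpleGraph V) (hconn : G.Connected) (hclaw : ClawFree G) :
    2 * irNum G ≤ Fintype.card V + 1 := by
  have h : irNum G ≤ (Fintype.card V + 1) / 2 := by
    refine csSup_le ⟨0, ∅, by simp [IsIrredundant]⟩ ?_
    rintro k ⟨S, hS, rfl⟩
    have := hS.two_mul_card_le hconn hclaw
    omega
  omega

/-- If `G` is a connected claw-free finite simple graph of order `n ≥ 1`, then
`IR(G) ≤ (n+1)/2`, i.e. `2·IR(G) ≤ n + 1`. -/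
theorem clawFree_irNum_le {V : Type*} [Fintype V] [DecidableEq V]
    (G : SimpleGraph V) (hconn : G.Connected) (hclaw : ClawFree G)
    (hn : 1 ≤ Fintype.card V) :
    2 * irNum G ≤ Fintype.card V + 1 :=
  clawFree_irNum_le_general G hconn hclaw

end EnclavelessGame
end
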